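/- arXiv:hep-th/0103204 — 8 statements merged into one kernel-verified Lean document; each statement's English description precedes it below -/
import Mathlib

section
/- Let k be a field and 𝔦 an ideal of the polynomial ring k[z1, z2] such that the quotient V = k[z1, z2]/𝔦 has finite k-dimension n. Let I(1) ∈ V be the class of the constant polynomial 1, and let B1, B2 ∈ End_k(V) be the operators of multiplication by z1 and z2 modulo 𝔦. Then B1 and B2 commute, and the data is stable: every k-subspace S ⊆ V that is invariant under B1 and B2 and contains I(1) equals V. -/
open MvPolynomial

set_option maxHeartbeats 1000000
set_option synthInstance.maxHeartbeats 400000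

/-- For an ideal `𝔦 ⊆ k[z₁,z₂]` of finite codimension `n`, the multiplication
operators `B₁, B₂` by `z₁, z₂` on `V = k[z₁,z₂]/𝔦` commute, and the data
`(B₁, B₂, I(1))` is stable: any subspace invariant under `B₁` and `B₂`
containing the class of `1` is all of `V`. -/
theorem hilbert_scheme_data_of_ideal
    (k : Type*) [Field k] (n : ℕ) (hn : 1 ≤ n)
    (𝔦 : Ideal (MvPolynomial (Fin 2) k))
    (hfin : FiniteDimensional k (MvPolynomial (Fin 2) k ⧸ 𝔦))
    (hdim : Module.finrank k (MvPolynomial (Fin 2) k ⧸ 𝔦) = n) :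
    (LinearMap.mulLeft k (Ideal.Quotient.mk 𝔦 (X 0)) ∘ₗ
        LinearMap.mulLeft k (Ideal.Quotient.mk 𝔦 (X 1))
      = LinearMap.mulLeft k (Ideal.Quotient.mk 𝔦 (X 1)) ∘ₗ
        LinearMap.mulLeft k (Ideal.Quotient.mk 𝔦 (X 0))) ∧
    (∀ S : Submodule k (MvPolynomial (Fin 2) k ⧸ 𝔦),
      (∀ s ∈ S, Ideal.Quotient.mk 𝔦 (X 0) * s ∈ S) →
      (∀ s ∈ S, Ideal.Quotient.mk 𝔦 (X 1) * s ∈ S) →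
      Ideal.Quotient.mk 𝔦 1 ∈ S → S = ⊤) := by
  constructor
  · ext v
    simp only [LinearMap.comp_apply, LinearMap.mulLeft_apply]
    ring
  · intro S h0 h1 hone
    rw [Submodule.eq_top_iff']
    intro v
    obtain ⟨p, rfl⟩ := Ideal.Quotient.mk_surjective v
    induction p using MvPolynomial.induction_on with
    | C a =>
        have hC : Ideal.Quotient.mk 𝔦 (C a) = a • Ideal.Quotient.mk 𝔦 1 := by
          rw [show (C a : MvPolynomial (Fin 2) k) = a • 1 by
            rw [smul_eq_C_mul, mul_one]]
          exact map_smul (Ideal.Quotient.mkₐ k 𝔦) a 1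
        rw [hC]
        exact S.smul_mem a hone
    | add p q hp hq =>
        rw [RingHom.map_add]; exact S.add_mem hp hq
    | mul_X p i hp =>
        rw [RingHom.map_mul, mul_comm]
        fin_cases i
        · exact h0 _ hp
        · exact h1 _ hp
end

section
/- Let k be a field, n ≥ 1, and let B1, B2 ∈ End_k(k^n) be commuting endomorphisms with a vector ι ∈ k^n satisfying the stability condition: the only subspace invariant under both B1 and B2 and containing ι is k^n. Then for every polynomial f ∈ k[z1, z2], f(B1, B2)·ι = 0 if and only if f(B1, B2) = 0; that is, the ideals { f : f(B1, B2)·ι = 0 } and { f : f(B1, B2) = 0 } of k[z1, z2] coincide. -/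
open MvPolynomial

/-- Evaluation of a two-variable polynomial at a commuting pair of endomorphisms:
`f(B₁,B₂) = Σ_d coeff_d(f) • B₁^{d₀} B₂^{d₁}`, which is the image of `f` under the
unique `k`-algebra homomorphism to the commutative subalgebra generated by
`B₁, B₂` sending `z₁ ↦ B₁`, `z₂ ↦ B₂`. -/
noncomputable def evalPair {k : Type*} [Field k] {n : ℕ}
    (B1 B2 : Module.End k (Fin n → k)) (f : MvPolynomial (Fin 2) k) :
    Module.End k (Fin n → k) :=
  f.support.sum fun d => f.coeff d • (B1 ^ (d 0) * B2 ^ (d 1))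

/-- For a stable commuting pair `(B₁, B₂, ι)`: `f(B₁,B₂)·ι = 0` iff `f(B₁,B₂) = 0`,
i.e. the ideals `{f : f(B₁,B₂)ι = 0}` and `{f : f(B₁,B₂) = 0}` coincide. -/
theorem eval_vanishes_iff_annihilates_of_stable
    (k : Type*) [Field k] (n : ℕ) (hn : 1 ≤ n)
    (B1 B2 : Module.End k (Fin n → k)) (hcomm : B1 * B2 = B2 * B1)
    (ι : Fin n → k)
    (hstab : ∀ S : Submodule k (Fin n → k),
      (∀ s ∈ S, B1 s ∈ S) → (∀ s ∈ S, B2 s ∈ S) → ι ∈ S → S = ⊤) :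
    ∀ f : MvPolynomial (Fin 2) k, evalPair B1 B2 f ι = 0 ↔ evalPair B1 B2 f = 0 := by
  intro f
  constructor
  · intro h
    have hC : Commute B1 B2 := hcomm
    have h1 : Commute B1 (evalPair B1 B2 f) := by
      apply Commute.sum_right
      intro d _
      exact ((Commute.refl B1).pow_right _ |>.mul_right (hC.pow_right _)).smul_right _
    have h2 : Commute B2 (evalPair B1 B2 f) := by
      apply Commute.sum_right
      intro d _
      exact ((hC.symm.pow_right _).mul_right ((Commute.refl B2).pow_right _)).smul_right _
    have hS := hstab (LinearMap.ker (evalPair B1 B2 f)) ?_ ?_ h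
    · exact LinearMap.ker_eq_top.mp hS
    · intro s hs
      simp only [LinearMap.mem_ker] at hs ⊢
      have : (evalPair B1 B2 f * B1) s = (B1 * evalPair B1 B2 f) s := by rw [h1.eq]
      simpa [Module.End.mul_apply, hs] using this
    · intro s hs
      simp only [LinearMap.mem_ker] at hs ⊢
      have : (evalPair B1 B2 f * B2) s = (B2 * evalPair B1 B2 f) s := by rw [h2.eq]
      simpa [Module.End.mul_apply, hs] using this
  · intro h
    rw [h]
    rfl
end

section
/- Let k be a field of characteristic zero, λ, μ ∈ k, and α, β ∈ k not both zero. Then the set 𝔦 = { f ∈ k[z1, z2] : f(λ, μ) = 0 and α·(∂f/∂z1)(λ, μ) + β·(∂f/∂z2)(λ, μ) = 0 } is an ideal of k[z1, z2] and equals the ideal generated by the four polynomials (z1 − λ)², (z1 − λ)(z2 − μ), (z2 − μ)², and β(z1 − λ) − α(z2 − μ). (This is the ideal of a 'fat point' of length two at (λ, μ) with collision direction α∂_{z1} + β∂_{z2}.) -/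
open MvPolynomial

private lemma sub_eval_mem {k : Type*} [CommRing k] (p : Fin 2 → k)
    (f : MvPolynomial (Fin 2) k) :
    f - C (eval p f) ∈ Ideal.span ({X 0 - C (p 0), X 1 - C (p 1)} :
      Set (MvPolynomial (Fin 2) k)) := by
  induction f using MvPolynomial.induction_on with
  | C a => simp
  | add f g hf hg =>
      have : f + g - C (eval p (f + g)) =
          (f - C (eval p f)) + (g - C (eval p g)) := by
        simp [map_add]; ring
      rw [this]; exact add_mem hf hg
  | mul_X f i hf =>
      have : f * X i - C (eval p (f * X i)) =
          (f - C (eval p f)) * X i + C (eval p f) * (X i - C (p i)) := by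
        simp [map_mul]; ring
      rw [this]
      refine add_mem (Ideal.mul_mem_right _ _ hf) (Ideal.mul_mem_left _ _ ?_)
      apply Ideal.subset_span
      fin_cases i <;> simp

/-- Over a field of characteristic zero, the ideal of a length-two "fat point"
at `(λ, μ)` with collision direction `α∂₁ + β∂₂`:
`{f : f(λ,μ) = 0 ∧ α·∂₁f(λ,μ) + β·∂₂f(λ,μ) = 0}` equals the ideal generated by
`(z₁−λ)², (z₁−λ)(z₂−μ), (z₂−μ)², β(z₁−λ) − α(z₂−μ)`. -/
theorem fat_point_ideal
    (k : Type*) [Field k] [CharZero k] (lam mu α β : k) (hαβ : ¬(α = 0 ∧ β = 0)) :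
    ∀ f : MvPolynomial (Fin 2) k,
      (eval ![lam, mu] f = 0 ∧
        α * eval ![lam, mu] (pderiv 0 f) + β * eval ![lam, mu] (pderiv 1 f) = 0)
      ↔ f ∈ Ideal.span ({(X 0 - C lam) ^ 2, (X 0 - C lam) * (X 1 - C mu),
          (X 1 - C mu) ^ 2, C β * (X 0 - C lam) - C α * (X 1 - C mu)} :
          Set (MvPolynomial (Fin 2) k)) := by
  intro f
  set p : Fin 2 → k := ![lam, mu] with hp
  have hp0 : p 0 = lam := rfl
  have hp1 : p 1 = mu := rfl
  set u : MvPolynomial (Fin 2) k := X 0 - C lam with hu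
  set v : MvPolynomial (Fin 2) k := X 1 - C mu with hv
  constructor
  · rintro ⟨h0, h1⟩
    -- f ∈ (u, v)
    have hf : f ∈ Ideal.span ({u, v} : Set (MvPolynomial (Fin 2) k)) := by
      have := sub_eval_mem p f
      rw [h0, map_zero, sub_zero] at this
      simpa [hu, hv, hp0, hp1] using this
    obtain ⟨g, h, hgh⟩ := Ideal.mem_span_pair.mp hf
    have hder : α * eval p g + β * eval p h = 0 := by
      subst hgh
      simpa [pderiv_mul, hu, hv, hp] using h1
    set a := eval p g with ha
    set b := eval p h with hb
    have hg' := sub_eval_mem p g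
    have hh' := sub_eval_mem p h
    obtain ⟨s, t, hst⟩ := Ideal.mem_span_pair.mp
      (show g - C a ∈ Ideal.span ({u, v} : Set (MvPolynomial (Fin 2) k)) by
        simpa [hu, hv, hp0, hp1, ← ha] using hg')
    obtain ⟨s', t', hst'⟩ := Ideal.mem_span_pair.mp
      (show h - C b ∈ Ideal.span ({u, v} : Set (MvPolynomial (Fin 2) k)) by
        simpa [hu, hv, hp0, hp1, ← hb] using hh')
    obtain ⟨c, hc1, hc2⟩ : ∃ c : k, a = c * β ∧ b = -(c * α) := by
      by_cases hβ : β = 0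
      · have hα : α ≠ 0 := fun h => hαβ ⟨h, hβ⟩
        have ha0 : a = 0 := by
          have : α * a = 0 := by rw [hβ] at hder; linear_combination hder
          exact (mul_eq_zero.mp this).resolve_left hα
        exact ⟨-b / α, by simp [ha0, hβ], by field_simp⟩
      · refine ⟨a / β, by field_simp, ?_⟩
        field_simp
        linear_combination hder
    have hfeq : f = C c * (C β * u - C α * v)
        + (s * u ^ 2 + t * (u * v)) + (s' * (u * v) + t' * v ^ 2) := by
      have hg : g = s * u + t * v + C a := by
        linear_combination -hst
      have hh : h = s' * u + t' * v + C b := by linear_combination -hst'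
      rw [← hgh, hg, hh, hc1, hc2]
      simp only [map_mul, map_neg]
      ring
    rw [hfeq]
    refine add_mem (add_mem (Ideal.mul_mem_left _ _ ?_)
      (add_mem (Ideal.mul_mem_left _ _ ?_) (Ideal.mul_mem_left _ _ ?_)))
      (add_mem (Ideal.mul_mem_left _ _ ?_) (Ideal.mul_mem_left _ _ ?_)) <;>
      apply Ideal.subset_span <;> simp
  · intro hf
    refine Submodule.span_induction ?_ ?_ ?_ ?_ hf
    · rintro g hg
      simp only [Set.mem_insert_iff, Set.mem_singleton_iff] at hg
      rcases hg with rfl | rfl | rfl | rfl <;>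
        constructor <;>
        simp [hu, hv, hp, pderiv_mul, pderiv_pow] <;> ring
    · simp
    · rintro x y - - ⟨hx0, hx1⟩ ⟨hy0, hy1⟩
      refine ⟨by simp [hx0, hy0], ?_⟩
      simp only [map_add]
      linear_combination hx1 + hy1
    · rintro r x - ⟨hx0, hx1⟩
      rw [smul_eq_mul]
      refine ⟨by simp [hx0], ?_⟩
      simp only [pderiv_mul, map_add, map_mul]
      rw [hx0]
      linear_combination eval p r * hx1
end

section
/- Let v ≥ 1, ζ > 0, and suppose B1, B2 ∈ M_v(ℂ), a column vector I ∈ M_{v×1}(ℂ) and a row vector J ∈ M_{1×v}(ℂ) satisfy the rank-one (w = 1) deformed ADHM equations [B1, B2] + I·J = 0 and [B1, B1†] + [B2, B2†] + I·I† − J†·J = 2ζ·1_V. Then J = 0; consequently [B1, B2] = 0 and I†·I = 2vζ. -/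
/-!
Let `S` be the span of the vectors `w I`, `w` a word in `B₁, B₂`: the smallest subspace containing
the image of `I` and invariant under `B₁, B₂`. First, `J` vanishes on `S`. By induction on the
length of `w`: once all shorter words are killed, `[B₁, B₂] = -I J` lets the letters of `w`
commute, so `J w I` only depends on the numbers `a, b` of letters `B₁, B₂`, and
`tr (J B₁ᵃ B₂ᵇ I) = -tr (B₁ᵃ B₂ᵇ [B₁, B₂])` expands into `-a · J B₁ᵃ B₂ᵇ I`.
Then, with `P` the orthogonal projection onto `Sᗮ`, so that `P I = 0` and `J P = J`, the trace of
the real equation against `P` reads `-‖(1 - P) B₁ P‖² - ‖(1 - P) B₂ P‖² - ‖J‖² = 2ζ ‖P‖²`,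
which forces `J = 0` since `ζ ≥ 0`.
-/

open Matrix

namespace ADHM

theorem mul_pow_sub_pow_mul_eq_sum {α : Type*} [Ring α] (A B : α) (k : ℕ) :
    B * A ^ k - A ^ k * B = ∑ i ∈ Finset.range k, A ^ i * (B * A - A * B) * A ^ (k - 1 - i) := by
  induction k with
  | zero => simp
  | succ k ih =>
    have hsplit : B * A ^ (k + 1) - A ^ (k + 1) * B
        = (B * A ^ k - A ^ k * B) * A + A ^ k * (B * A - A * B) := by
      rw [pow_succ]; noncomm_ring
    rw [hsplit, ih, Finset.sum_mul, Finset.sum_range_succ, Nat.add_sub_cancel, Nat.sub_self,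
      pow_zero, mul_one]
    congr 1
    refine Finset.sum_congr rfl fun i hi => ?_
    rw [mul_assoc, ← pow_succ]
    have := Finset.mem_range.1 hi
    congr 2
    omega

theorem trace_mul_commutator {n R : Type*} [Fintype n] [CommRing R] (X A B : Matrix n n R) :
    trace (X * (B * A - A * B)) = -trace (A * (B * X - X * B)) := by
  simp only [Matrix.mul_sub, trace_sub, ← Matrix.mul_assoc]
  rw [trace_mul_cycle X B A, trace_mul_cycle A B X]
  ring

section Words

variable {n m R : Type*} [Fintype n] [DecidableEq n] [Fintype m]

def word [Semiring R] (B1 B2 : Matrix n n R) (l : List Bool) : Matrix n n R :=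
  (l.map fun b => bif b then B1 else B2).prod

section Semiring

variable [Semiring R] (B1 B2 : Matrix n n R)

@[simp] lemma word_nil : word B1 B2 [] = 1 := rfl

@[simp] lemma word_cons (b : Bool) (l : List Bool) :
    word B1 B2 (b :: l) = (bif b then B1 else B2) * word B1 B2 l := List.prod_cons

@[simp] lemma word_append (l₁ l₂ : List Bool) :
    word B1 B2 (l₁ ++ l₂) = word B1 B2 l₁ * word B1 B2 l₂ := by simp [word]

@[simp] lemma word_replicate (b : Bool) (k : ℕ) :
    word B1 B2 (List.replicate k b) = (bif b then B1 else B2) ^ k := by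
  simp [word, List.map_replicate, List.prod_replicate]

end Semiring

section Ring

variable [Ring R] {B1 B2 : Matrix n n R} {I : Matrix n m R} {J : Matrix m n R}

lemma mul_word_mul_swap (hIJ : I * J = B2 * B1 - B1 * B2) (u w : List Bool) :
    J * word B1 B2 (u ++ false :: true :: w) * I
      = J * word B1 B2 (u ++ true :: false :: w) * I
        + J * word B1 B2 u * I * (J * word B1 B2 w * I) := by
  have h : B2 * B1 = B1 * B2 + I * J := by rw [hIJ]; abel
  simp only [word_append, word_cons, cond_true, cond_false, ← mul_assoc B2 B1, h]
  simp only [Matrix.add_mul, Matrix.mul_add, Matrix.mul_assoc]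

lemma mul_word_mul_perm (hIJ : I * J = B2 * B1 - B1 * B2) {N : ℕ}
    (hshort : ∀ w : List Bool, w.length < N → J * word B1 B2 w * I = 0)
    {l₁ l₂ : List Bool} (h : l₁.Perm l₂) (u : List Bool) (hlen : u.length + l₁.length ≤ N) :
    J * word B1 B2 (u ++ l₁) * I = J * word B1 B2 (u ++ l₂) * I := by
  induction h generalizing u with
  | nil => rfl
  | cons x _ ih => simpa using ih (u ++ [x]) (by simp at hlen ⊢; omega)
  | swap x y l =>
    have hu := hshort u (by simp at hlen; omega)
    cases x <;> cases y <;> simp only [mul_word_mul_swap hIJ, hu, Matrix.zero_mul, add_zero]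
  | trans h₁ _ ih₁ ih₂ => exact (ih₁ u hlen).trans (ih₂ u (h₁.length_eq ▸ hlen))

end Ring

section CommRing

variable [CommRing R] [IsAddTorsionFree R] {B1 B2 : Matrix n n R}
  {I : Matrix n (Fin 1) R} {J : Matrix (Fin 1) n R}

lemma mul_pow_mul_pow_mul_eq_zero (hIJ : I * J = B2 * B1 - B1 * B2) {a b : ℕ}
    (hshort : ∀ w : List Bool, w.length < a + b → J * word B1 B2 w * I = 0) :
    J * (B1 ^ a * B2 ^ b) * I = 0 := by
  set t := trace (J * (B1 ^ a * B2 ^ b) * I)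
  have hterm : ∀ i ∈ Finset.range a,
      trace (B1 * (B1 ^ i * (I * J) * B1 ^ (a - 1 - i) * B2 ^ b)) = t := by
    intro i hi
    have hi := Finset.mem_range.1 hi
    have hperm : (List.replicate (a - 1 - i) true ++ (List.replicate b false ++
        List.replicate (i + 1) true)).Perm (List.replicate a true ++ List.replicate b false) := by
      rw [List.perm_iff_count]
      intro x
      cases x <;> simp [List.count_replicate]
      omega
    have hword := mul_word_mul_perm hIJ hshort hperm [] (by simp; omega)
    simp only [List.nil_append, word_append, word_replicate, cond_true, cond_false] at hword
    show _ = trace (J * (B1 ^ a * B2 ^ b) * I)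
    rw [← hword, pow_succ', show B1 * (B1 ^ i * (I * J) * B1 ^ (a - 1 - i) * B2 ^ b)
      = B1 * B1 ^ i * I * (J * (B1 ^ (a - 1 - i) * B2 ^ b)) by simp only [Matrix.mul_assoc],
      trace_mul_comm]
    simp only [Matrix.mul_assoc]
  have key : t = -(a • t) :=
    calc t = trace ((B1 ^ a * B2 ^ b) * (B2 * B1 - B1 * B2)) := by
          rw [← hIJ, ← trace_mul_cycle']
          exact trace_mul_comm _ _
      _ = -trace (B1 * ((B2 * B1 ^ a - B1 ^ a * B2) * B2 ^ b)) := by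
          rw [trace_mul_commutator]
          simp only [Matrix.sub_mul, Matrix.mul_assoc, (Commute.self_pow B2 b).eq]
      _ = -(a • t) := by
          rw [mul_pow_sub_pow_mul_eq_sum, ← hIJ, Finset.sum_mul, Finset.mul_sum, trace_sum,
            Finset.sum_congr rfl hterm, Finset.sum_const, Finset.card_range]
  have ht : (a + 1) • t = 0 := by
    rw [succ_nsmul, add_comm]
    exact eq_neg_iff_add_eq_zero.1 key
  ext i j
  simpa [t, trace_fin_one, Fin.fin_one_eq_zero] using
    (nsmul_eq_zero_iff.1 ht).resolve_right a.succ_ne_zero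

lemma mul_word_mul_eq_zero (hIJ : I * J = B2 * B1 - B1 * B2) (l : List Bool) :
    J * word B1 B2 l * I = 0 := by
  induction hN : l.length using Nat.strong_induction_on generalizing l with
  | _ N ih =>
    have hperm : l.Perm (List.replicate (l.count true) true ++
        List.replicate (l.count false) false) := by
      rw [List.perm_iff_count]
      intro x
      cases x <;> simp [List.count_replicate]
    have hlen : l.count true + l.count false = N := by
      rw [add_comm, List.count_false_add_count_true, hN]
    have hshort : ∀ w : List Bool, w.length < l.count true + l.count false →
        J * word B1 B2 w * I = 0 := fun w hw => ih _ (hlen ▸ hw) w rfl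
    have hcanon := mul_word_mul_perm hIJ hshort hperm [] (by simp [hN, hlen])
    rw [List.nil_append, List.nil_append, word_append, word_replicate, word_replicate] at hcanon
    exact hcanon.trans (mul_pow_mul_pow_mul_eq_zero hIJ hshort)

end CommRing

end Words

section Projection

variable {n m R : Type*} [Fintype n] [DecidableEq n] [Fintype m]

lemma trace_commutator_mul_of_isStarProjection [CommRing R] [StarRing R] {P B : Matrix n n R}
    (hP : IsStarProjection P) (hPB : P * B * P = P * B) :
    trace ((B * Bᴴ - Bᴴ * B) * P) = -trace (((1 - P) * B * P)ᴴ * ((1 - P) * B * P)) := by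
  have hPH : Pᴴ = P := hP.isSelfAdjoint
  have hQH : (1 - P)ᴴ = 1 - P := hP.one_sub.isSelfAdjoint
  have hPP : P * P = P := hP.isIdempotentElem
  have hQQ : (1 - P) * (1 - P) = 1 - P := hP.one_sub.isIdempotentElem
  have hnorm : trace (((1 - P) * B * P)ᴴ * ((1 - P) * B * P))
      = trace (Bᴴ * B * P) - trace (B * Bᴴ * P) :=
    calc trace (((1 - P) * B * P)ᴴ * ((1 - P) * B * P))
        = trace (P * (Bᴴ * ((1 - P) * (1 - P)) * B * P)) := by
          rw [conjTranspose_mul, conjTranspose_mul, hPH, hQH]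
          simp only [Matrix.mul_assoc]
      _ = trace (Bᴴ * (1 - P) * B * (P * P)) := by
          rw [hQQ, trace_mul_comm]
          simp only [Matrix.mul_assoc]
      _ = trace (Bᴴ * B * P) - trace (Bᴴ * (P * B * P)) := by
          rw [hPP]
          simp only [Matrix.mul_sub, Matrix.sub_mul, trace_sub, Matrix.mul_one, Matrix.mul_assoc]
      _ = trace (Bᴴ * B * P) - trace (B * Bᴴ * P) := by
          rw [hPB, trace_mul_cycle']
          simp only [Matrix.mul_assoc]
  rw [hnorm, Matrix.sub_mul, trace_sub]
  ring

open scoped ComplexOrder in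
lemma eq_zero_of_isStarProjection {ζ : ℝ} (hζ : 0 ≤ ζ) {B1 B2 P : Matrix n n ℂ}
    {I : Matrix n m ℂ} {J : Matrix m n ℂ}
    (hR : (B1 * B1ᴴ - B1ᴴ * B1) + (B2 * B2ᴴ - B2ᴴ * B2) + I * Iᴴ - Jᴴ * J = (2 * ζ : ℂ) • 1)
    (hP : IsStarProjection P) (hPB1 : P * B1 * P = P * B1) (hPB2 : P * B2 * P = P * B2)
    (hPI : P * I = 0) (hJP : J * P = J) : J = 0 := by
  have hI : trace (I * Iᴴ * P) = 0 := by
    rw [trace_mul_cycle, hPI, Matrix.zero_mul, trace_zero]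
  have hJ : trace (Jᴴ * J * P) = trace (Jᴴ * J) := by rw [Matrix.mul_assoc, hJP]
  have hPtr : trace P = trace (Pᴴ * P) := by
    rw [show Pᴴ = P from hP.isSelfAdjoint, hP.isIdempotentElem.eq]
  have htr := congrArg (trace <| · * P) hR
  rw [Matrix.sub_mul, Matrix.add_mul, Matrix.add_mul, trace_sub, trace_add, trace_add,
    trace_commutator_mul_of_isStarProjection hP hPB1,
    trace_commutator_mul_of_isStarProjection hP hPB2, hI, hJ, Matrix.smul_mul, Matrix.one_mul,
    trace_smul, smul_eq_mul, hPtr] at htr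
  have hζ' : (0 : ℂ) ≤ 2 * ζ := by exact_mod_cast mul_nonneg zero_le_two hζ
  have hJJ : trace (Jᴴ * J) ≤ 0 := by
    rw [show trace (Jᴴ * J) = -(trace (((1 - P) * B1 * P)ᴴ * ((1 - P) * B1 * P))
      + trace (((1 - P) * B2 * P)ᴴ * ((1 - P) * B2 * P)) + 2 * ζ * trace (Pᴴ * P)) by
        linear_combination -htr]
    exact neg_nonpos.2 (add_nonneg (add_nonneg (posSemidef_conjTranspose_mul_self _).trace_nonneg
      (posSemidef_conjTranspose_mul_self _).trace_nonneg)
      (mul_nonneg hζ' (posSemidef_conjTranspose_mul_self _).trace_nonneg))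
  exact trace_conjTranspose_mul_self_eq_zero_iff.1
    (le_antisymm hJJ (posSemidef_conjTranspose_mul_self J).trace_nonneg)

lemma eq_zero_of_invtSubmodule [DecidableEq m] {ζ : ℝ} (hζ : 0 ≤ ζ) {B1 B2 : Matrix n n ℂ}
    {I : Matrix n m ℂ} {J : Matrix m n ℂ}
    (hR : (B1 * B1ᴴ - B1ᴴ * B1) + (B2 * B2ᴴ - B2ᴴ * B2) + I * Iᴴ - Jᴴ * J = (2 * ζ : ℂ) • 1)
    (S : Submodule ℂ (EuclideanSpace ℂ n))
    (hB1 : S ∈ Module.End.invtSubmodule (toEuclideanLin B1))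
    (hB2 : S ∈ Module.End.invtSubmodule (toEuclideanLin B2))
    (hI : LinearMap.range (toEuclideanLin I) ≤ S) (hJ : S ≤ LinearMap.ker (toEuclideanLin J)) :
    J = 0 := by
  set P : Matrix n n ℂ := (toEuclideanCLM (n := n) (𝕜 := ℂ)).symm Sᗮ.starProjection
  have hP : IsStarProjection P := isStarProjection_starProjection.map
    (toEuclideanCLM (n := n) (𝕜 := ℂ)).symm.toStarAlgHom
  have hPx (x) : toEuclideanLin P x = Sᗮ.starProjection x := by
    rw [← coe_toEuclideanCLM_eq_toEuclideanLin, StarAlgEquiv.apply_symm_apply]; rfl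
  have hker {x} (hx : x ∈ S) : toEuclideanLin P x = 0 := by
    rw [hPx, Submodule.starProjection_apply_eq_zero_iff]
    exact S.le_orthogonal_orthogonal hx
  have hsub (x) : x - toEuclideanLin P x ∈ S := by
    simpa only [hPx, Submodule.orthogonal_orthogonal] using
      Submodule.sub_starProjection_mem_orthogonal (K := Sᗮ) x
  have hPB {B : Matrix n n ℂ} (hB : S ∈ Module.End.invtSubmodule (toEuclideanLin B)) :
      P * B * P = P * B := by
    refine toEuclideanLin.injective (LinearMap.ext fun x => ?_)
    have := hker (hB (hsub x))
    simp only [map_sub, sub_eq_zero] at this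
    simpa only [toLpLin_mul_same, LinearMap.comp_apply] using this.symm
  refine eq_zero_of_isStarProjection hζ hR hP (hPB hB1) (hPB hB2) ?_ ?_
  · refine toEuclideanLin.injective (LinearMap.ext fun x => ?_)
    simpa only [toLpLin_mul_same, LinearMap.comp_apply, map_zero, LinearMap.zero_apply] using
      hker (hI (LinearMap.mem_range_self _ x))
  · refine toEuclideanLin.injective (LinearMap.ext fun x => ?_)
    have := hJ (hsub x)
    simp only [LinearMap.mem_ker, map_sub, sub_eq_zero] at this
    simpa only [toLpLin_mul_same, LinearMap.comp_apply] using this.symm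

end Projection

section WordSpan

variable {n m : Type*} [Fintype n] [DecidableEq n] [Fintype m] [DecidableEq m]
  (B1 B2 : Matrix n n ℂ) (I : Matrix n m ℂ)

noncomputable def wordSpan : Submodule ℂ (EuclideanSpace ℂ n) :=
  ⨆ l : List Bool, LinearMap.range (toEuclideanLin (word B1 B2 l * I))

lemma range_le_wordSpan : LinearMap.range (toEuclideanLin I) ≤ wordSpan B1 B2 I :=
  le_iSup_of_le [] (by rw [word_nil, Matrix.one_mul])

lemma wordSpan_mem_invtSubmodule (b : Bool) :
    wordSpan B1 B2 I ∈ Module.End.invtSubmodule (toEuclideanLin (bif b then B1 else B2)) := by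
  rw [Module.End.mem_invtSubmodule_iff_map_le, wordSpan, Submodule.map_iSup]
  refine iSup_le fun l => le_iSup_of_le (b :: l) ?_
  rw [← LinearMap.range_comp, ← toLpLin_mul_same, word_cons, Matrix.mul_assoc]

lemma wordSpan_le_ker {J : Matrix m n ℂ} (hJ : ∀ l, J * word B1 B2 l * I = 0) :
    wordSpan B1 B2 I ≤ LinearMap.ker (toEuclideanLin J) := by
  refine iSup_le fun l => LinearMap.range_le_ker_iff.2 ?_
  rw [← toLpLin_mul_same, ← Matrix.mul_assoc, hJ, map_zero]

end WordSpan

lemma conjTranspose_mul_self_eq_smul_one {n : Type*} [Fintype n] [DecidableEq n] {ζ : ℝ}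
    {B1 B2 : Matrix n n ℂ} {I : Matrix n (Fin 1) ℂ}
    (hR : (B1 * B1ᴴ - B1ᴴ * B1) + (B2 * B2ᴴ - B2ᴴ * B2) + I * Iᴴ = (2 * ζ : ℂ) • 1) :
    Iᴴ * I = ((2 * Fintype.card n * ζ : ℝ) : ℂ) • (1 : Matrix (Fin 1) (Fin 1) ℂ) := by
  have htr := congrArg trace hR
  simp only [trace_add, trace_sub, trace_mul_comm B1, trace_mul_comm B2, sub_self, zero_add,
    trace_smul, trace_one, smul_eq_mul, trace_mul_comm I, trace_fin_one] at htr
  ext i j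
  rw [Fin.fin_one_eq_zero i, Fin.fin_one_eq_zero j, htr]
  simp
  ring

end ADHM

open ADHM

theorem rank_one_adhm_J_eq_zero_general
    (v : ℕ) (ζ : ℝ) (hζ : 0 < ζ)
    (B1 B2 : Matrix (Fin v) (Fin v) ℂ)
    (I : Matrix (Fin v) (Fin 1) ℂ) (J : Matrix (Fin 1) (Fin v) ℂ)
    (hC : (B1 * B2 - B2 * B1) + I * J = 0)
    (hR : (B1 * B1ᴴ - B1ᴴ * B1) + (B2 * B2ᴴ - B2ᴴ * B2) + I * Iᴴ - Jᴴ * J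
        = (2 * ζ : ℂ) • (1 : Matrix (Fin v) (Fin v) ℂ)) :
    J = 0 ∧ B1 * B2 = B2 * B1 ∧
      Iᴴ * I = ((2 * v * ζ : ℝ) : ℂ) • (1 : Matrix (Fin 1) (Fin 1) ℂ) := by
  have hIJ : I * J = B2 * B1 - B1 * B2 := by
    rw [← sub_eq_zero, ← hC]
    abel
  have hJ : J = 0 := eq_zero_of_invtSubmodule hζ.le hR (wordSpan B1 B2 I)
    (wordSpan_mem_invtSubmodule B1 B2 I true) (wordSpan_mem_invtSubmodule B1 B2 I false)
    (range_le_wordSpan B1 B2 I) (wordSpan_le_ker B1 B2 I (mul_word_mul_eq_zero hIJ))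
  subst hJ
  refine ⟨rfl, ?_, ?_⟩
  · simpa [sub_eq_zero] using hC
  · have h := conjTranspose_mul_self_eq_smul_one (ζ := ζ) (by simpa using hR)
    rwa [Fintype.card_fin] at h

/-- (Nakajima) For `w = 1` deformed ADHM data with `ζ > 0`, necessarily `J = 0`;
consequently `[B₁,B₂] = 0` and `I†·I = 2vζ`. -/
theorem rank_one_adhm_J_eq_zero
    (v : ℕ) (hv : 1 ≤ v) (ζ : ℝ) (hζ : 0 < ζ)
    (B1 B2 : Matrix (Fin v) (Fin v) ℂ)
    (I : Matrix (Fin v) (Fin 1) ℂ) (J : Matrix (Fin 1) (Fin v) ℂ)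
    (hC : (B1 * B2 - B2 * B1) + I * J = 0)
    (hR : (B1 * B1ᴴ - B1ᴴ * B1) + (B2 * B2ᴴ - B2ᴴ * B2) + I * Iᴴ - Jᴴ * J
        = (2 * ζ : ℂ) • (1 : Matrix (Fin v) (Fin v) ℂ)) :
    J = 0 ∧ B1 * B2 = B2 * B1 ∧
      Iᴴ * I = ((2 * v * ζ : ℝ) : ℂ) • (1 : Matrix (Fin 1) (Fin 1) ℂ) :=
  rank_one_adhm_J_eq_zero_general v ζ hζ B1 B2 I J hC hR
end

section
/- Let v ≥ 1, let B1, B2 ∈ M_v(ℂ) satisfy [B1, B2] = 0, let I ∈ ℂ^v be a column vector, and let z = (z1, z2) ∈ ℂ² be such that the hermitian matrix G⁻¹ := (B1 − z1)(B1† − conj(z1)) + (B2 − z2)(B2† − conj(z2)) is invertible, with inverse G. Set χ = 1/√(1 + I†·G·I) (a positive real number, since G is positive definite), Ψ1 = −(B2† − conj(z2))·G·I·χ and Ψ2 = −(B1† − conj(z1))·G·I·χ. Then: (i) (B2 − z2)Ψ1 + (B1 − z1)Ψ2 + I·χ = 0; (ii) (conj(z1) − B1†)Ψ1 + (B2† −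 conj(z2))Ψ2 = 0; (iii) Ψ1†Ψ1 + Ψ2†Ψ2 + χ² = 1. That is, Ψ = (Ψ1, Ψ2, χ) solves the abelian (w = 1, J = 0) Dirac equation 𝒟_z†Ψ = 0 with normalisation Ψ†Ψ = 1. -/
open Matrix

/-- The explicit solution of the abelian (`w = 1`, `J = 0`) deformed ADHM Dirac
equation: with `G` the inverse of
`G⁻¹ = (B₁−z₁)(B₁†−z̄₁) + (B₂−z₂)(B₂†−z̄₂)`, `χ = 1/√(1 + I†GI)`,
`Ψ₁ = −(B₂†−z̄₂)GIχ` and `Ψ₂ = −(B₁†−z̄₁)GIχ`, the triple `Ψ = (Ψ₁,Ψ₂,χ)`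
satisfies `τ_z Ψ = 0`, `σ_z† Ψ = 0` and `Ψ†Ψ = 1`. -/
theorem abelian_dirac_solution
    (v : ℕ) (hv : 1 ≤ v)
    (B1 B2 : Matrix (Fin v) (Fin v) ℂ) (hcomm : B1 * B2 = B2 * B1)
    (I : Matrix (Fin v) (Fin 1) ℂ) (z1 z2 : ℂ)
    (G : Matrix (Fin v) (Fin v) ℂ)
    (hG : ((B1 - z1 • 1) * (B1ᴴ - (starRingEnd ℂ) z1 • 1) +
            (B2 - z2 • 1) * (B2ᴴ - (starRingEnd ℂ) z2 • 1)) * G = 1 ∧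
          G * ((B1 - z1 • 1) * (B1ᴴ - (starRingEnd ℂ) z1 • 1) +
            (B2 - z2 • 1) * (B2ᴴ - (starRingEnd ℂ) z2 • 1)) = 1)
    (χ : ℝ) (hχ : χ = 1 / Real.sqrt (1 + ((Iᴴ * G * I) 0 0).re))
    (Ψ1 Ψ2 : Matrix (Fin v) (Fin 1) ℂ)
    (hΨ1 : Ψ1 = -((χ : ℂ) • ((B2ᴴ - (starRingEnd ℂ) z2 • 1) * G * I)))
    (hΨ2 : Ψ2 = -((χ : ℂ) • ((B1ᴴ - (starRingEnd ℂ) z1 • 1) * G * I))) :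
    (B2 - z2 • 1) * Ψ1 + (B1 - z1 • 1) * Ψ2 + (χ : ℂ) • I = 0 ∧
    ((starRingEnd ℂ) z1 • 1 - B1ᴴ) * Ψ1 + (B2ᴴ - (starRingEnd ℂ) z2 • 1) * Ψ2 = 0 ∧
    (Ψ1ᴴ * Ψ1 + Ψ2ᴴ * Ψ2) 0 0 + (χ : ℂ) ^ 2 = 1 := by
  obtain ⟨hG1, hG2⟩ := hG
  set A1 := B1 - z1 • (1 : Matrix (Fin v) (Fin v) ℂ) with hA1
  set A2 := B2 - z2 • (1 : Matrix (Fin v) (Fin v) ℂ) with hA2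
  set S1 := B1ᴴ - (starRingEnd ℂ) z1 • (1 : Matrix (Fin v) (Fin v) ℂ) with hS1
  set S2 := B2ᴴ - (starRingEnd ℂ) z2 • (1 : Matrix (Fin v) (Fin v) ℂ) with hS2
  have hA1s : A1ᴴ = S1 := by
    simp [hA1, hS1, conjTranspose_smul]
  have hA2s : A2ᴴ = S2 := by
    simp [hA2, hS2, conjTranspose_smul]
  have hS1s : S1ᴴ = A1 := by rw [← hA1s, conjTranspose_conjTranspose]
  have hS2s : S2ᴴ = A2 := by rw [← hA2s, conjTranspose_conjTranspose]
  have hBB : B1ᴴ * B2ᴴ = B2ᴴ * B1ᴴ := by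
    calc B1ᴴ * B2ᴴ = (B2 * B1)ᴴ := (conjTranspose_mul _ _).symm
    _ = (B1 * B2)ᴴ := by rw [hcomm]
    _ = B2ᴴ * B1ᴴ := conjTranspose_mul _ _
  have hSS : S1 * S2 = S2 * S1 := by
    simp only [hS1, hS2, sub_mul, mul_sub, Matrix.smul_mul, Matrix.mul_smul,
      Matrix.one_mul, Matrix.mul_one, hBB, smul_smul, mul_comm]
    module
  -- (i)
  have h0' : A1 * (S1 * (G * I)) + A2 * (S2 * (G * I)) = I := by
    have h := congrArg (fun M => M * I) hG1
    simp only [Matrix.add_mul, Matrix.mul_assoc, Matrix.one_mul] at h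
    exact h
  have h0 : A2 * (S2 * G * I) + A1 * (S1 * G * I) = I := by
    simp only [Matrix.mul_assoc]
    rw [add_comm]
    exact h0'
  have part1 : A2 * Ψ1 + A1 * Ψ2 + (χ : ℂ) • I = 0 := by
    rw [hΨ1, hΨ2]
    calc A2 * -((χ : ℂ) • (S2 * G * I)) + A1 * -((χ : ℂ) • (S1 * G * I)) + (χ : ℂ) • I
        = (χ : ℂ) • (I - (A2 * (S2 * G * I) + A1 * (S1 * G * I))) := by
          simp only [Matrix.mul_neg, Matrix.mul_smul]; module
    _ = 0 := by rw [h0, sub_self, smul_zero]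
  -- (ii)
  have hswap : S1 * (S2 * G * I) = S2 * (S1 * G * I) := by
    simp only [← Matrix.mul_assoc, hSS]
  have part2 : ((starRingEnd ℂ) z1 • 1 - B1ᴴ) * Ψ1 + S2 * Ψ2 = 0 := by
    have hneg : (starRingEnd ℂ) z1 • (1 : Matrix (Fin v) (Fin v) ℂ) - B1ᴴ = -S1 := by
      rw [hS1]; abel
    rw [hΨ1, hΨ2, hneg]
    calc -S1 * -((χ : ℂ) • (S2 * G * I)) + S2 * -((χ : ℂ) • (S1 * G * I))
        = (χ : ℂ) • (S1 * (S2 * G * I) - S2 * (S1 * G * I)) := by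
          simp only [Matrix.neg_mul, Matrix.mul_neg, Matrix.mul_smul, neg_neg]; module
    _ = 0 := by rw [hswap, sub_self, smul_zero]
  -- hermiticity of G
  have hGinvH : (A1 * S1 + A2 * S2)ᴴ = A1 * S1 + A2 * S2 := by
    simp [conjTranspose_add, conjTranspose_mul, hA1s, hA2s, hS1s, hS2s]
  have hGH : Gᴴ = G := by
    have h1 : Gᴴ * (A1 * S1 + A2 * S2) = 1 := by
      calc Gᴴ * (A1 * S1 + A2 * S2) = ((A1 * S1 + A2 * S2)ᴴ * G)ᴴ := by
            rw [conjTranspose_mul, conjTranspose_conjTranspose]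
      _ = ((A1 * S1 + A2 * S2) * G)ᴴ := by rw [hGinvH]
      _ = 1 := by rw [hG1, conjTranspose_one]
    calc Gᴴ = Gᴴ * ((A1 * S1 + A2 * S2) * G) := by rw [hG1, Matrix.mul_one]
    _ = (Gᴴ * (A1 * S1 + A2 * S2)) * G := by rw [Matrix.mul_assoc]
    _ = G := by rw [h1, Matrix.one_mul]
  -- I†GI = P1†P1 + P2†P2
  set P1 := S1 * G * I with hP1
  set P2 := S2 * G * I with hP2
  have hP : Iᴴ * G * I = P1ᴴ * P1 + P2ᴴ * P2 := by
    have e1 : P1ᴴ = Iᴴ * G * A1 := by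
      rw [hP1, conjTranspose_mul, conjTranspose_mul, hS1s, hGH, Matrix.mul_assoc]
    have e2 : P2ᴴ = Iᴴ * G * A2 := by
      rw [hP2, conjTranspose_mul, conjTranspose_mul, hS2s, hGH, Matrix.mul_assoc]
    rw [e1, e2, hP1, hP2]
    simp only [Matrix.mul_assoc]
    rw [← Matrix.mul_add, ← Matrix.mul_add, h0']
  -- the entry is a nonnegative real
  have entry_eq : ∀ (M : Matrix (Fin v) (Fin 1) ℂ),
      (Mᴴ * M) 0 0 = ((∑ i, Complex.normSq (M i 0) : ℝ) : ℂ) := by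
    intro M
    simp only [Matrix.mul_apply, conjTranspose_apply]
    push_cast
    congr 1
    ext i
    simp [Complex.star_def, ← Complex.normSq_eq_conj_mul_self]
  set r : ℝ := (∑ i, Complex.normSq (P1 i 0)) + ∑ i, Complex.normSq (P2 i 0) with hr
  have hrnn : 0 ≤ r := by
    apply add_nonneg <;> exact Finset.sum_nonneg fun i _ => Complex.normSq_nonneg _
  have hentry : (Iᴴ * G * I) 0 0 = (r : ℂ) := by
    rw [hP, Matrix.add_apply, entry_eq P1, entry_eq P2, hr]
    simp only [hP1, hP2]
    push_cast
    ring
  have hre : ((Iᴴ * G * I) 0 0).re = r := by rw [hentry]; simp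
  have hs : (0 : ℝ) < 1 + r := by linarith
  have hχ2 : (χ : ℝ) ^ 2 = 1 / (1 + r) := by
    rw [hχ, hre, div_pow, one_pow, Real.sq_sqrt hs.le]
  -- (iii)
  have hΨsum : Ψ1ᴴ * Ψ1 + Ψ2ᴴ * Ψ2 = ((χ : ℂ) * (χ : ℂ)) • (Iᴴ * G * I) := by
    rw [hΨ1, hΨ2, hP]
    simp only [conjTranspose_neg, conjTranspose_smul, Complex.star_def,
      Complex.conj_ofReal, Matrix.neg_mul, Matrix.mul_neg, neg_neg,
      Matrix.smul_mul, Matrix.mul_smul, smul_smul]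
    module
  refine ⟨part1, part2, ?_⟩
  rw [hΨsum, Matrix.smul_apply, hentry, smul_eq_mul]
  have : ((χ : ℂ) * (χ : ℂ)) * (r : ℂ) + (χ : ℂ) ^ 2 = ((χ ^ 2 * (1 + r) : ℝ) : ℂ) := by
    push_cast; ring
  rw [this, hχ2, one_div, inv_mul_cancel₀ hs.ne']
  norm_num
end

section
/- The integral over ℝ⁴ computing the second Chern number of the charge-one abelian instanton equals one: ∫_{ℝ⁴} 1/(‖x‖²·(1 + ‖x‖²)³) dx = π²/2 (with respect to four-dimensional Lebesgue measure). -/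
open MeasureTheory

/-! In polar coordinates a radial integral over `ℝ⁴` is `4 · vol(B⁴) · ∫₀^∞ r³ f(r) dr`, with
`vol(B⁴) = π²/2`. For `f(r) = 1/(r²(1+r²)³)` the radial integrand is `r/(1+r²)³`, whose
antiderivative `-1/(4(1+r²)²)` gives `1/4`, so the integral is `4 · π²/2 · 1/4 = π²/2`. -/

open Set Filter Topology in
theorem integral_Ioi_div_one_add_sq_pow_succ {n : ℕ} (hn : n ≠ 0) :
    ∫ r in Ioi (0 : ℝ), r / (1 + r ^ 2) ^ (n + 1) = 1 / (2 * n : ℝ) := by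
  have hderiv : ∀ r ∈ Ici (0 : ℝ),
      HasDerivAt (fun r : ℝ => -(2 * n * (1 + r ^ 2) ^ n)⁻¹) (r / (1 + r ^ 2) ^ (n + 1)) r := by
    intro r _
    have hbase : HasDerivAt (fun r : ℝ => 1 + r ^ 2) (2 * r) r := by
      simpa using (hasDerivAt_pow 2 r).const_add 1
    have hne : 2 * (n : ℝ) * (1 + r ^ 2) ^ n ≠ 0 :=
      mul_ne_zero (mul_ne_zero two_ne_zero (Nat.cast_ne_zero.mpr hn)) (by positivity)
    refine (((hbase.pow n).const_mul (2 * (n : ℝ))).inv hne).neg.congr_deriv ?_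
    obtain ⟨m, rfl⟩ := Nat.exists_eq_succ_of_ne_zero hn
    simp only [Nat.succ_sub_one, Pi.pow_apply, Nat.succ_eq_add_one]
    field_simp
    ring
  have hlim : Tendsto (fun r : ℝ => -(2 * n * (1 + r ^ 2) ^ n)⁻¹) atTop (𝓝 0) := by
    have h : Tendsto (fun r : ℝ => 2 * n * (1 + r ^ 2) ^ n) atTop atTop :=
      ((tendsto_pow_atTop hn).comp (tendsto_atTop_add_const_left _ 1
        (tendsto_pow_atTop two_ne_zero))).const_mul_atTop (by positivity)
    simpa using h.inv_tendsto_atTop.neg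
  rw [integral_Ioi_of_hasDerivAt_of_nonneg' hderiv (fun r (hr : 0 < r) => by positivity) hlim]
  simp

open Real Metric in
theorem EuclideanSpace.volume_ball_fin_four (x : EuclideanSpace ℝ (Fin 4)) (r : ℝ) :
    volume (ball x r) = .ofReal r ^ 4 * .ofReal (π ^ 2 / 2) := by
  norm_num [InnerProductSpace.volume_ball_of_dim_even (k := 2) (by simp) x]

open Set in
/-- The second Chern number integral of the charge-one abelian instanton:
`∫_{ℝ⁴} 1/(‖x‖²(1+‖x‖²)³) dx = π²/2`. -/
theorem charge_one_instanton_action :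
    ∫ x : EuclideanSpace ℝ (Fin 4), 1 / (‖x‖ ^ 2 * (1 + ‖x‖ ^ 2) ^ 3)
      = Real.pi ^ 2 / 2 := by
  rw [integral_fun_norm_addHaar volume (fun r => 1 / (r ^ 2 * (1 + r ^ 2) ^ 3)),
    finrank_euclideanSpace_fin, measureReal_def, EuclideanSpace.volume_ball_fin_four]
  have hradial : ∫ r in Ioi (0 : ℝ), r ^ (4 - 1) • (1 / (r ^ 2 * (1 + r ^ 2) ^ 3))
      = ∫ r in Ioi (0 : ℝ), r / (1 + r ^ 2) ^ (2 + 1) := by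
    refine setIntegral_congr_fun measurableSet_Ioi fun r (hr : 0 < r) => ?_
    simp only [smul_eq_mul]
    field_simp
  rw [hradial, integral_Ioi_div_one_add_sq_pow_succ two_ne_zero, ENNReal.ofReal_one, one_pow, one_mul, ENNReal.toReal_ofReal (by positivity)]
  norm_num
  ring
end

section
/- Let m > 0 and define f, h : ℝ → ℝ by f(x) = log(x/(x + m)) and h(x) = x + m·log(x). Then for every x > 0, f''(x)·h'(x) + h''(x)·f'(x) + (2/x)·f'(x)·h'(x) = 0. (Via the identity ∂∂̄f(r²) ∧ ∂∂̄h(r²) = 2r²h'f'(f''/f' + h''/h' + 2/r²)·⋆1, this expresses that the curvature F = ∂∂̄ log χ² of the charge-one abelian instanton, with χ² = r²/(r² + m), satisfies F ∧ Ω = 0 for the Burns Kähler form Ω = −(i/2)∂∂̄(r² + m log r²), i.e. F is anti-self-dual with respect to the Burns metric.) -/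
/-! The left-hand side equals `x⁻² (x² f' h')'`, and `x² f' h'` is constant:
`f' = m / (x (x + m))` and `h' = (x + m) / x`, so `x² f' h' = m`. -/

open Filter Topology Real

lemma deriv_deriv_eq_of_hasDerivAt {f f' : ℝ → ℝ} {f'' x : ℝ}
    (hf : ∀ᶠ y in 𝓝 x, HasDerivAt f (f' y) y) (hf' : HasDerivAt f' f'' x) :
    deriv (deriv f) x = f'' := by
  have hderiv : deriv f =ᶠ[𝓝 x] f' := hf.mono fun _ hy => hy.deriv
  rw [hderiv.deriv_eq, hf'.deriv]

section
variable {m x : ℝ}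

lemma hasDerivAt_log_div_add_const (hx : x ≠ 0) (hxm : x + m ≠ 0) :
    HasDerivAt (fun y => log (y / (y + m))) (x⁻¹ - (x + m)⁻¹) x := by
  have hquot : HasDerivAt (fun y => y / (y + m)) ((1 * (x + m) - x * 1) / (x + m) ^ 2) x :=
    (hasDerivAt_id' x).div ((hasDerivAt_id' x).add_const m) hxm
  refine (hquot.log (div_ne_zero hx hxm)).congr_deriv ?_
  field_simp

lemma hasDerivAt_add_mul_log (hx : x ≠ 0) :
    HasDerivAt (fun y => y + m * log y) (1 + m * x⁻¹) x :=
  (hasDerivAt_id' x).add ((hasDerivAt_log hx).const_mul m)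

lemma deriv_deriv_log_div_add_const (hx : x ≠ 0) (hxm : x + m ≠ 0) :
    deriv (deriv fun y => log (y / (y + m))) x = -(x ^ 2)⁻¹ + ((x + m) ^ 2)⁻¹ := by
  have hnear : ∀ᶠ y in 𝓝 x, y ≠ 0 ∧ y + m ≠ 0 :=
    (eventually_ne_nhds hx).and ((continuous_add_const m).continuousAt.eventually_ne hxm)
  refine deriv_deriv_eq_of_hasDerivAt
    (hnear.mono fun y hy => hasDerivAt_log_div_add_const hy.1 hy.2) ?_
  refine ((hasDerivAt_inv hx).sub (((hasDerivAt_id' x).add_const m).inv hxm)).congr_deriv ?_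
  ring

lemma deriv_deriv_add_mul_log (hx : x ≠ 0) :
    deriv (deriv fun y => y + m * log y) x = -(m * (x ^ 2)⁻¹) :=
  deriv_deriv_eq_of_hasDerivAt
    ((eventually_ne_nhds hx).mono fun _ hy => hasDerivAt_add_mul_log hy)
    (((hasDerivAt_inv hx).const_mul m).const_add 1 |>.congr_deriv (by ring))

end

/-- For `f(x) = log(x/(x+m))` and `h(x) = x + m·log x` with `m > 0`:
`f''h' + h''f' + (2/x)f'h' = 0` on `(0,∞)`. Via
`∂∂̄f(r²) ∧ ∂∂̄h(r²) = 2r²h'f'(f''/f' + h''/h' + 2/r²)·⋆1` this expresses that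
the charge-one abelian instanton curvature `F = ∂∂̄ log χ²`, `χ² = r²/(r²+m)`,
satisfies `F ∧ Ω = 0` for the Burns Kähler form
`Ω = −(i/2)∂∂̄(r² + m log r²)`, i.e. `F` is anti-self-dual for the Burns metric. -/
theorem burns_antiselfdual_ode (m : ℝ) (hm : 0 < m) :
    ∀ x : ℝ, 0 < x →
      deriv (deriv (fun y : ℝ => Real.log (y / (y + m)))) x *
          deriv (fun y : ℝ => y + m * Real.log y) x +
        deriv (deriv (fun y : ℝ => y + m * Real.log y)) x *
          deriv (fun y : ℝ => Real.log (y / (y + m))) x +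
        (2 / x) * deriv (fun y : ℝ => Real.log (y / (y + m))) x *
          deriv (fun y : ℝ => y + m * Real.log y) x = 0 := by
  intro x hx
  have hxm : x + m ≠ 0 := by positivity
  rw [(hasDerivAt_log_div_add_const hx.ne' hxm).deriv, (hasDerivAt_add_mul_log hx.ne').deriv,
    deriv_deriv_log_div_add_const hx.ne' hxm, deriv_deriv_add_mul_log hx.ne']
  field_simp
  ring
end

section
/- Let g : ℝ → M_n(ℂ) be a twice differentiable matrix-valued function with g(t) invertible for all t, and let X : ℝ → M_n(ℂ) be twice differentiable. Suppose A(t) := g(t)·X(t)·g(t)⁻¹ satisfies A''(t) = 0 for all t (free motion). Define M(t) = g(t)⁻¹·g'(t) and L(t) = X'(t) + [M(t), X(t)]. Then A'(t) = g(t)·L(t)·g(t)⁻¹ and L'(t) = [L(t), M(t)] for all t; i.e. (L, M) is a Lax pair for the geodesic flow. -/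
/-!
With `M = g⁻¹ g'`, the product rule and `(g⁻¹)' = -g⁻¹ g' g⁻¹` give, for every
differentiable `Y`, `(g Y g⁻¹)' = g (Y' + [M, Y]) g⁻¹`. For `Y = X` this is
`A' = g L g⁻¹`; for `Y = L` it gives `0 = A'' = g (L' + [M, L]) g⁻¹`, hence `L' = [L, M]`.
That `g⁻¹` is differentiable at all follows from Cramer's rule `g⁻¹ = (det g)⁻¹ • adj g`.
-/

open Matrix

attribute [local instance] Matrix.normedAddCommGroup Matrix.normedSpace

section MatrixCalculus

variable {𝕜 R : Type*} [NontriviallyNormedField 𝕜] {l m p : Type*} {t : 𝕜}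

theorem HasDerivAt.matrix_mul [Fintype m] [Fintype p] [NormedRing R] [NormedAlgebra 𝕜 R]
    {A : 𝕜 → Matrix l m R} {B : 𝕜 → Matrix m p R} {A' : Matrix l m R} {B' : Matrix m p R}
    (hA : HasDerivAt A A' t) (hB : HasDerivAt B B' t) :
    HasDerivAt (fun s => A s * B s) (A' * B t + A t * B') t := by
  refine hasDerivAt_pi.2 fun i => hasDerivAt_pi.2 fun j => ?_
  simp only [Matrix.add_apply, Matrix.mul_apply, ← Finset.sum_add_distrib]
  exact HasDerivAt.fun_sum fun k _ =>
    (hasDerivAt_pi.1 (hasDerivAt_pi.1 hA i) k).mul (hasDerivAt_pi.1 (hasDerivAt_pi.1 hB k) j)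

theorem Differentiable.matrix_mul [Fintype l] [Fintype m] [Fintype p] [NormedRing R]
    [NormedAlgebra 𝕜 R] {A : 𝕜 → Matrix l m R} {B : 𝕜 → Matrix m p R}
    (hA : Differentiable 𝕜 A) (hB : Differentiable 𝕜 B) :
    Differentiable 𝕜 (fun s => A s * B s) :=
  fun t => ((hA t).hasDerivAt.matrix_mul (hB t).hasDerivAt).differentiableAt

variable [Fintype m] [DecidableEq m]

theorem DifferentiableAt.matrix_det [NormedCommRing R] [NormedAlgebra 𝕜 R]
    {A : 𝕜 → Matrix m m R} (hA : DifferentiableAt 𝕜 A t) :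
    DifferentiableAt 𝕜 (fun s => (A s).det) t := by
  simp only [det_apply']
  exact DifferentiableAt.fun_sum fun σ _ => (DifferentiableAt.fun_finsetProd fun i _ =>
    differentiableAt_pi.1 (differentiableAt_pi.1 hA (σ i)) i).const_mul _

theorem DifferentiableAt.matrix_adjugate [NormedCommRing R] [NormedAlgebra 𝕜 R]
    {A : 𝕜 → Matrix m m R} (hA : DifferentiableAt 𝕜 A t) :
    DifferentiableAt 𝕜 (fun s => (A s).adjugate) t := by
  refine differentiableAt_pi.2 fun i => differentiableAt_pi.2 fun j => ?_
  simp only [adjugate_apply]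
  refine DifferentiableAt.matrix_det (differentiableAt_pi.2 fun k => ?_)
  by_cases hk : k = j
  · simp only [hk, updateRow_self]
    exact differentiableAt_const _
  · simpa only [updateRow_ne hk] using differentiableAt_pi.1 hA k

variable [NormedField R] [NormedAlgebra 𝕜 R]

theorem DifferentiableAt.matrix_inv {A : 𝕜 → Matrix m m R} (hA : DifferentiableAt 𝕜 A t)
    (hdet : (A t).det ≠ 0) : DifferentiableAt 𝕜 (fun s => (A s)⁻¹) t := by
  simp only [inv_def, Ring.inverse_eq_inv']
  exact (hA.matrix_det.inv hdet).smul hA.matrix_adjugate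

theorem HasDerivAt.matrix_inv {A : 𝕜 → Matrix m m R} {A' : Matrix m m R}
    (hA : HasDerivAt A A' t) (hdet : (A t).det ≠ 0) :
    HasDerivAt (fun s => (A s)⁻¹) (-((A t)⁻¹ * A' * (A t)⁻¹)) t := by
  obtain ⟨B', hB'⟩ : ∃ B', HasDerivAt (fun s => (A s)⁻¹) B' t :=
    ⟨_, (hA.differentiableAt.matrix_inv hdet).hasDerivAt⟩
  have hone : (fun s => (A s)⁻¹ * A s) =ᶠ[nhds t] fun _ => 1 := by
    filter_upwards [hA.differentiableAt.matrix_det.continuousAt.eventually_ne hdet] with s hs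
    exact nonsing_inv_mul _ hs.isUnit
  have hzero : B' * A t + (A t)⁻¹ * A' = 0 :=
    (hB'.matrix_mul hA).unique ((hasDerivAt_const t 1).congr_of_eventuallyEq hone)
  suffices B' = -((A t)⁻¹ * A' * (A t)⁻¹) from this ▸ hB'
  calc B' = B' * (A t * (A t)⁻¹) := by rw [mul_nonsing_inv _ hdet.isUnit, mul_one]
    _ = (B' * A t + (A t)⁻¹ * A') * (A t)⁻¹ - (A t)⁻¹ * A' * (A t)⁻¹ := by noncomm_ring
    _ = -((A t)⁻¹ * A' * (A t)⁻¹) := by rw [hzero, zero_mul, zero_sub]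

theorem HasDerivAt.matrix_conj {g X : 𝕜 → Matrix m m R} {g' X' : Matrix m m R}
    (hg : HasDerivAt g g' t) (hX : HasDerivAt X X' t) (hdet : (g t).det ≠ 0) :
    HasDerivAt (fun s => g s * X s * (g s)⁻¹)
      (g t * (X' + ((g t)⁻¹ * g' * X t - X t * ((g t)⁻¹ * g'))) * (g t)⁻¹) t := by
  convert (hg.matrix_mul hX).matrix_mul (hg.matrix_inv hdet) using 1
  simp only [mul_add, mul_sub, ← mul_assoc, mul_nonsing_inv _ hdet.isUnit, one_mul]
  noncomm_ring

end MatrixCalculus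

/-- Lax pair from free motion: if `A(t) = g(t)X(t)g(t)⁻¹` satisfies `A'' = 0`,
then with `M = g⁻¹g'` and `L = X' + [M,X]` one has `A' = gLg⁻¹` and
`L' = [L,M]`. -/
theorem lax_pair_of_free_motion
    (n : ℕ) (g gInv X : ℝ → Matrix (Fin n) (Fin n) ℂ)
    (hg : Differentiable ℝ g) (hg' : Differentiable ℝ (deriv g))
    (hX : Differentiable ℝ X) (hX' : Differentiable ℝ (deriv X))
    (hInv : ∀ t, g t * gInv t = 1 ∧ gInv t * g t = 1)
    (hfree : ∀ t, deriv (deriv (fun s => g s * X s * gInv s)) t = 0) :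
    ∀ t : ℝ,
      deriv (fun s => g s * X s * gInv s) t
        = g t * (deriv X t + (gInv t * deriv g t * X t - X t * (gInv t * deriv g t)))
            * gInv t ∧
      deriv (fun s => deriv X s +
          (gInv s * deriv g s * X s - X s * (gInv s * deriv g s))) t
        = (deriv X t + (gInv t * deriv g t * X t - X t * (gInv t * deriv g t)))
            * (gInv t * deriv g t)
          - (gInv t * deriv g t)
            * (deriv X t + (gInv t * deriv g t * X t - X t * (gInv t * deriv g t))) := by
  have hdet t : (g t).det ≠ 0 := det_ne_zero_of_right_inverse (hInv t).1
  obtain rfl : gInv = fun t => (g t)⁻¹ := funext fun t => (inv_eq_right_inv (hInv t).1).symm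
  beta_reduce at hfree ⊢
  set M := fun t => (g t)⁻¹ * deriv g t
  set L := fun t => deriv X t + (M t * X t - X t * M t)
  have hA' : deriv (fun s => g s * X s * (g s)⁻¹) = fun t => g t * L t * (g t)⁻¹ :=
    funext fun t => ((hg t).hasDerivAt.matrix_conj (hX t).hasDerivAt (hdet t)).deriv
  have hL : Differentiable ℝ L := by
    have hM : Differentiable ℝ M := fun t =>
      ((hg t).matrix_inv (hdet t)).hasDerivAt.matrix_mul (hg' t).hasDerivAt |>.differentiableAt
    exact hX'.add ((hM.matrix_mul hX).sub (hX.matrix_mul hM))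
  intro t
  refine ⟨congrFun hA' t, ?_⟩
  have hunit : IsUnit (g t) := (isUnit_iff_isUnit_det _).2 (hdet t).isUnit
  have hcomm : deriv L t + (M t * L t - L t * M t) = 0 := by
    have h0 : 0 = g t * (deriv L t + (M t * L t - L t * M t)) * (g t)⁻¹ := by
      rw [← hfree t, hA']
      exact ((hg t).hasDerivAt.matrix_conj (hL t).hasDerivAt (hdet t)).deriv
    rwa [eq_comm, (isUnit_nonsing_inv_iff.2 hunit).mul_left_eq_zero,
      hunit.mul_right_eq_zero] at h0
  rw [← sub_eq_zero, ← hcomm]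
  abel
end
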